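/- Fix Ω > 0 and M > 1. For an integer i ≥ 1 and u, v ∈ ℝ⁴ define the sliced propagator C^i(u,v) = ∫_{M^{−2i}}^{M^{−2(i−1)}} (Ω/(2π sinh α)²) exp( −(Ω/4) coth(α/2) ‖u‖² − (Ω/4) tanh(α/2) ‖v‖² ) dα. Then there exist constants K > 0 and c > 0, depending only on Ω and M, such that for every integer i ≥ 1 and all u, v ∈ ℝ⁴: C^i(u,v) ≤ K M^{2i} exp( −c ( M^i ‖u‖ + M^{−i} ‖v‖ ) ). -/

import Mathlib

/-!
On the slice `M^{-2i} ≤ α ≤ M^{2-2i} ≤ 1` one has `sinh α ≥ α`, `coth (α/2) ≥ 1/α` and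
`tanh (α/2) ≥ α/6`, so the integrand is at most `Ω/(2π)² M^{4i}` times the Gaussian
`exp (-A (M^i‖u‖)² - B (M^{-i}‖v‖)²)`; multiplying by the length `≤ M² M^{-2i}` of the slice gives
the prefactor `M^{2i}`, and the Gaussian is dominated by an exponential since `-A x² ≤ A/4 - A x`.
-/

open MeasureTheory

/-- The sliced vulcanized Φ⋆⁴₄ propagator in short/long variables:
`C^i(u,v) = ∫_{M^{−2i}}^{M^{−2(i−1)}} (Ω/(2π sinh α)²)
  e^{−(Ω/4)coth(α/2)‖u‖² − (Ω/4)tanh(α/2)‖v‖²} dα`. -/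
noncomputable def Cslice (Ω M : ℝ) (i : ℕ) (u v : EuclideanSpace ℝ (Fin 4)) : ℝ :=
  ∫ α in (M ^ (-2 * (i : ℤ)))..(M ^ (-2 * ((i : ℤ) - 1))),
    Ω / (2 * Real.pi * Real.sinh α) ^ 2 *
      Real.exp (-(Ω / 4) * (Real.cosh (α / 2) / Real.sinh (α / 2)) * ‖u‖ ^ 2
        - Ω / 4 * Real.tanh (α / 2) * ‖v‖ ^ 2)

open Real

/-- `s` and `t` stand for `‖u‖²` and `‖v‖²`. -/
noncomputable def sliceIntegrand (Ω s t α : ℝ) : ℝ :=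
  Ω / (2 * π * sinh α) ^ 2 *
    exp (-(Ω / 4) * (cosh (α / 2) / sinh (α / 2)) * s - Ω / 4 * tanh (α / 2) * t)

lemma sinh_le_mul_exp (t : ℝ) : sinh t ≤ t * exp t := by
  have h : 1 - 2 * t ≤ exp (-(2 * t)) := by linarith [add_one_le_exp (-(2 * t))]
  have hprod : exp (-(2 * t)) * exp t = exp (-t) := by rw [← exp_add]; ring_nf
  rw [sinh_eq]
  nlinarith [exp_pos t]

lemma one_div_two_mul_le_coth {t : ℝ} (ht : 0 < t) : 1 / (2 * t) ≤ cosh t / sinh t := by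
  have hexp : exp t ≤ 2 * cosh t := by rw [cosh_eq]; linarith [exp_pos (-t)]
  rw [div_le_div_iff₀ (by positivity) (sinh_pos_iff.2 ht)]
  nlinarith [sinh_le_mul_exp t]

lemma div_three_le_tanh {t : ℝ} (ht₀ : 0 ≤ t) (ht₁ : t ≤ 1) : t / 3 ≤ tanh t := by
  have hcosh : cosh t ≤ 3 :=
    calc cosh t ≤ exp (t ^ 2 / 2) := cosh_le_exp_half_sq t
      _ ≤ exp 1 := exp_le_exp.2 (by nlinarith)
      _ ≤ 3 := by linarith [exp_one_lt_d9]
  rw [tanh_eq_sinh_div_cosh]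
  exact div_le_div₀ (sinh_nonneg_iff.2 ht₀) (self_le_sinh_iff.2 ht₀) (cosh_pos t) hcosh

lemma sliceIntegrand_le {Ω s t a b α : ℝ} (hΩ : 0 ≤ Ω) (hs : 0 ≤ s) (ht : 0 ≤ t)
    (ha : 0 < a) (hb : b ≤ 2) (hα : α ∈ Set.Icc a b) :
    sliceIntegrand Ω s t α ≤
      Ω / (2 * π * a) ^ 2 * exp (-(Ω / (4 * b)) * s - Ω * a / 24 * t) := by
  obtain ⟨haα, hαb⟩ := hα
  have hα : 0 < α := ha.trans_le haα
  have hsinh : a ≤ sinh α := haα.trans (self_le_sinh_iff.2 hα.le)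
  have hcoth : 1 / b ≤ cosh (α / 2) / sinh (α / 2) :=
    calc 1 / b ≤ 1 / α := one_div_le_one_div_of_le hα hαb
      _ = 1 / (2 * (α / 2)) := by ring
      _ ≤ _ := one_div_two_mul_le_coth (by positivity)
  have htanh : a / 6 ≤ tanh (α / 2) :=
    calc a / 6 ≤ α / 2 / 3 := by linarith
      _ ≤ _ := div_three_le_tanh (by positivity) (by linarith)
  unfold sliceIntegrand
  gcongr ?_ * exp ?_
  · gcongr
  · have hcoth' : Ω / (4 * b) * s ≤ Ω / 4 * (cosh (α / 2) / sinh (α / 2)) * s := by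
      rw [show Ω / (4 * b) = Ω / 4 * (1 / b) by ring]
      gcongr
    have htanh' : Ω * a / 24 * t ≤ Ω / 4 * tanh (α / 2) * t := by
      rw [show Ω * a / 24 = Ω / 4 * (a / 6) by ring]
      gcongr
    linarith

lemma integral_sliceIntegrand_le {Ω s t a b : ℝ} (hΩ : 0 ≤ Ω) (hs : 0 ≤ s) (ht : 0 ≤ t)
    (ha : 0 < a) (hab : a ≤ b) (hb : b ≤ 2) :
    ∫ α in a..b, sliceIntegrand Ω s t α ≤
      b * (Ω / (2 * π * a) ^ 2) * exp (-(Ω / (4 * b)) * s - Ω * a / 24 * t) := by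
  have hbound : ∀ α ∈ Set.uIoc a b, ‖sliceIntegrand Ω s t α‖ ≤
      Ω / (2 * π * a) ^ 2 * exp (-(Ω / (4 * b)) * s - Ω * a / 24 * t) := by
    intro α hα
    rw [Set.uIoc_of_le hab] at hα
    rw [Real.norm_of_nonneg (by unfold sliceIntegrand; positivity)]
    exact sliceIntegrand_le hΩ hs ht ha hb (Set.Ioc_subset_Icc_self hα)
  calc ∫ α in a..b, sliceIntegrand Ω s t α
      ≤ ‖∫ α in a..b, sliceIntegrand Ω s t α‖ := Real.le_norm_self _
    _ ≤ _ * |b - a| := intervalIntegral.norm_integral_le_of_norm_le_const hbound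
    _ ≤ _ := by
      rw [abs_of_nonneg (sub_nonneg.2 hab), mul_comm, ← mul_assoc]
      gcongr
      linarith

lemma Cslice_eq_integral_sliceIntegrand (Ω : ℝ) {M : ℝ} (hM : M ≠ 0) (i : ℕ)
    (u v : EuclideanSpace ℝ (Fin 4)) :
    Cslice Ω M i u v =
      ∫ α in ((M ^ i) ^ 2)⁻¹..M ^ 2 / (M ^ i) ^ 2, sliceIntegrand Ω (‖u‖ ^ 2) (‖v‖ ^ 2) α := by
  have hlow : M ^ (-2 * (i : ℤ)) = ((M ^ i) ^ 2)⁻¹ := by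
    rw [neg_mul, zpow_neg, mul_comm, zpow_mul, zpow_natCast, zpow_ofNat]
  have hup : M ^ (-2 * ((i : ℤ) - 1)) = M ^ 2 / (M ^ i) ^ 2 := by
    rw [show -2 * ((i : ℤ) - 1) = 2 + -2 * (i : ℤ) by ring, zpow_add₀ hM, hlow, zpow_ofNat,
      div_eq_mul_inv]
  rw [Cslice, hlow, hup]
  rfl

lemma Cslice_le_gaussian {Ω M : ℝ} (hΩ : 0 ≤ Ω) (hM : 1 < M) {i : ℕ} (hi : 1 ≤ i)
    (u v : EuclideanSpace ℝ (Fin 4)) :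
    Cslice Ω M i u v ≤ Ω * M ^ 2 / (4 * π ^ 2) * (M ^ i) ^ 2 *
      exp (-(Ω / (4 * M ^ 2) * (M ^ i * ‖u‖) ^ 2 + Ω / 24 * ((M ^ i)⁻¹ * ‖v‖) ^ 2)) := by
  set m := M ^ i
  have hMm : M ≤ m := by simpa using pow_le_pow_right₀ hM.le hi
  have hm : 0 < m := by positivity
  have hab : (m ^ 2)⁻¹ ≤ M ^ 2 / m ^ 2 := by
    rw [inv_eq_one_div]; gcongr; nlinarith
  have hb : M ^ 2 / m ^ 2 ≤ 2 := by
    rw [div_le_iff₀ (by positivity)]; nlinarith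
  have hprefactor : M ^ 2 / m ^ 2 * (Ω / (2 * π * (m ^ 2)⁻¹) ^ 2) =
      Ω * M ^ 2 / (4 * π ^ 2) * m ^ 2 := by
    field_simp
    ring
  have hexponent : -(Ω / (4 * (M ^ 2 / m ^ 2))) * ‖u‖ ^ 2 - Ω * (m ^ 2)⁻¹ / 24 * ‖v‖ ^ 2 =
      -(Ω / (4 * M ^ 2) * (m * ‖u‖) ^ 2 + Ω / 24 * (m⁻¹ * ‖v‖) ^ 2) := by
    field_simp
    ring
  rw [Cslice_eq_integral_sliceIntegrand Ω (by positivity) i u v, ← hprefactor, ← hexponent]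
  exact integral_sliceIntegrand_le hΩ (by positivity) (by positivity) (by positivity) hab hb

lemma exp_neg_quadratic_le {A B x y : ℝ} (hA : 0 ≤ A) (hB : 0 ≤ B) (hx : 0 ≤ x) (hy : 0 ≤ y) :
    exp (-(A * x ^ 2 + B * y ^ 2)) ≤ exp ((A + B) / 4) * exp (-(min A B * (x + y))) := by
  rw [← exp_add, exp_le_exp]
  nlinarith [mul_nonneg hA (sq_nonneg (x - 1 / 2)), mul_nonneg hB (sq_nonneg (y - 1 / 2)),
    mul_nonneg (sub_nonneg.2 (min_le_left A B)) hx, mul_nonneg (sub_nonneg.2 (min_le_right A B)) hy]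

/-- there are constants `K, c > 0` depending only on `Ω` and `M` such that
`C^i(u,v) ≤ K M^{2i} e^{−c(M^i‖u‖ + M^{−i}‖v‖)}` for all `i ≥ 1` and `u, v ∈ ℝ⁴`. -/
theorem stmt10 (Ω M : ℝ) (hΩ : 0 < Ω) (hM : 1 < M) :
    ∃ K > (0 : ℝ), ∃ c > (0 : ℝ), ∀ i : ℕ, 1 ≤ i → ∀ u v : EuclideanSpace ℝ (Fin 4),
      Cslice Ω M i u v ≤
        K * M ^ (2 * i) * Real.exp (-(c * (M ^ i * ‖u‖ + M ^ (-(i : ℤ)) * ‖v‖))) := by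
  set A := Ω / (4 * M ^ 2)
  set B := Ω / 24
  have hA : 0 < A := by positivity
  have hB : 0 < B := by positivity
  refine ⟨Ω * M ^ 2 / (4 * π ^ 2) * exp ((A + B) / 4), by positivity, min A B, lt_min hA hB, ?_⟩
  intro i hi u v
  rw [pow_mul', zpow_neg, zpow_natCast]
  calc Cslice Ω M i u v
      ≤ Ω * M ^ 2 / (4 * π ^ 2) * (M ^ i) ^ 2 *
          exp (-(A * (M ^ i * ‖u‖) ^ 2 + B * ((M ^ i)⁻¹ * ‖v‖) ^ 2)) :=
        Cslice_le_gaussian hΩ.le hM hi u v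
    _ ≤ Ω * M ^ 2 / (4 * π ^ 2) * (M ^ i) ^ 2 *
          (exp ((A + B) / 4) * exp (-(min A B * (M ^ i * ‖u‖ + (M ^ i)⁻¹ * ‖v‖)))) := by
      gcongr
      exact exp_neg_quadratic_le hA.le hB.le (by positivity) (by positivity)
    _ = _ := by ring
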